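/- arXiv:2311.07907 — 2 statements merged into one kernel-verified Lean document; each statement's English description precedes it below -/
import Mathlib

section
/- Curve stabbing depth of points is invariant under orientation-preserving similarity transformations: let f : ℝ² → ℝ² be given by f(x) = b + c•(R_α x), where b ∈ ℝ², c > 0, and R_α is the rotation of the plane by a fixed angle α. Let C be a nonempty finite family of n subsets of ℝ² (n ≥ 1) and q ∈ ℝ² a point, and assume θ ↦ min(stab_C(q,θ), stab_C(q,θ+π)) is integrable on [0,π]. Then D(f(q), f(C)) = D(q, C), where f(C) = {f(A) : A ∈ C}. -/
open Real MeasureTheory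
open scoped Classical

noncomputable section

abbrev Plane := EuclideanSpace ℝ (Fin 2)

/-- The ray rooted at `q` with angle `θ`. -/
def ray (q : Plane) (θ : ℝ) : Set Plane :=
  {p | ∃ t : ℝ, 0 ≤ t ∧ p = q + t • (WithLp.equiv 2 (Fin 2 → ℝ)).symm ![Real.cos θ, Real.sin θ]}

/-- The stabbing number: the number of members of `C` intersected by `ray q θ`. -/
def stab (C : Finset (Set Plane)) (q : Plane) (θ : ℝ) : ℕ :=
  (C.filter fun A => (ray q θ ∩ A).Nonempty).card

/-- The normalized point depth of `q` relative to `C`. -/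
def pointDepth (C : Finset (Set Plane)) (q : Plane) : ℝ :=
  (1 / (C.card * π)) * ∫ θ in (0:ℝ)..π, (min (stab C q θ) (stab C q (θ + π)) : ℝ)

/-- Rotation of the plane by angle `α`. -/
def rot (α : ℝ) (p : Plane) : Plane :=
  (WithLp.equiv 2 (Fin 2 → ℝ)).symm
    ![Real.cos α * p 0 - Real.sin α * p 1, Real.sin α * p 0 + Real.cos α * p 1]

/-!
A similarity `x ↦ b + c • R_α x` with `c > 0` is injective and maps the ray from `q` with
angle `θ` onto the ray from the image of `q` with angle `θ + α`. Hence the stabbing numbers of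
the image family at the image of `q` are those of `C` at `q` with the angle shifted by `α`, and since the integrand of
the depth is `π`-periodic in `θ`, the shift does not change its integral over a period.
-/

open Function

def dir (θ : ℝ) : Plane :=
  (WithLp.equiv 2 (Fin 2 → ℝ)).symm ![Real.cos θ, Real.sin θ]

lemma mem_ray {q p : Plane} {θ : ℝ} : p ∈ ray q θ ↔ ∃ t : ℝ, 0 ≤ t ∧ p = q + t • dir θ :=
  Iff.rfl

lemma dir_add_two_pi (θ : ℝ) : dir (θ + 2 * π) = dir θ := by
  simp only [dir, cos_add_two_pi, sin_add_two_pi]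

lemma ray_add_two_pi (q : Plane) (θ : ℝ) : ray q (θ + 2 * π) = ray q θ := by
  ext p
  simp only [mem_ray, dir_add_two_pi]

lemma stab_add_two_pi (C : Finset (Set Plane)) (q : Plane) (θ : ℝ) :
    stab C q (θ + 2 * π) = stab C q θ := by
  rw [stab, stab, ray_add_two_pi]

lemma stab_image_of_injective {g : Plane → Plane} (hg : Injective g) (C : Finset (Set Plane))
    {q p : Plane} {θ φ : ℝ} (hray : g '' ray q θ = ray p φ) :
    stab (C.image (g '' ·)) p φ = stab C q θ := by
  rw [stab, Finset.filter_image, Finset.card_image_of_injective _ (Set.image_injective.2 hg)]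
  congr 1
  refine Finset.filter_congr fun A _ => ?_
  rw [← hray, ← Set.image_inter hg, Set.image_nonempty]

def minStab (C : Finset (Set Plane)) (q : Plane) (θ : ℝ) : ℝ :=
  min (stab C q θ : ℝ) (stab C q (θ + π))

lemma pointDepth_eq_integral_minStab (C : Finset (Set Plane)) (q : Plane) :
    pointDepth C q = (1 / (C.card * π)) * ∫ θ in (0 : ℝ)..π, minStab C q θ :=
  rfl

lemma minStab_periodic (C : Finset (Set Plane)) (q : Plane) : Periodic (minStab C q) π := by
  intro θ
  rw [minStab, minStab, add_assoc, ← two_mul, stab_add_two_pi, min_comm]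

lemma rot_neg_rot (α : ℝ) (p : Plane) : rot (-α) (rot α p) = p := by
  ext i
  fin_cases i <;> simp [rot]
  · linear_combination p 0 * sin_sq_add_cos_sq α
  · linear_combination p 1 * sin_sq_add_cos_sq α

lemma rot_injective (α : ℝ) : Injective (rot α) :=
  LeftInverse.injective (rot_neg_rot α)

lemma rot_add_smul_dir (α : ℝ) (q : Plane) (t θ : ℝ) :
    rot α (q + t • dir θ) = rot α q + t • dir (θ + α) := by
  ext i
  fin_cases i <;> simp [rot, dir, cos_add, sin_add] <;> ring

def similarity (b : Plane) (c α : ℝ) (x : Plane) : Plane :=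
  b + c • rot α x

section Similarity

variable {b : Plane} {c : ℝ} (α : ℝ)

lemma similarity_injective (hc : 0 < c) : Injective (similarity b c α) :=
  (add_right_injective b).comp ((smul_right_injective Plane hc.ne').comp (rot_injective α))

lemma similarity_add_smul_dir (q : Plane) (t θ : ℝ) :
    similarity b c α (q + t • dir θ) = similarity b c α q + (c * t) • dir (θ + α) := by
  simp only [similarity, rot_add_smul_dir, smul_add, smul_smul, add_assoc]

lemma image_ray_similarity (hc : 0 < c) (q : Plane) (θ : ℝ) :
    similarity b c α '' ray q θ = ray (similarity b c α q) (θ + α) := by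
  ext p
  simp only [Set.mem_image, mem_ray]
  constructor
  · rintro ⟨x, ⟨t, ht, rfl⟩, rfl⟩
    exact ⟨c * t, by positivity, similarity_add_smul_dir α q t θ⟩
  · rintro ⟨s, hs, rfl⟩
    refine ⟨q + (s / c) • dir θ, ⟨s / c, by positivity, rfl⟩, ?_⟩
    rw [similarity_add_smul_dir, mul_div_cancel₀ s hc.ne']

variable (C : Finset (Set Plane)) (q : Plane)

lemma card_image_similarity (hc : 0 < c) : (C.image (similarity b c α '' ·)).card = C.card :=
  Finset.card_image_of_injective _ (Set.image_injective.2 (similarity_injective α hc))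

lemma minStab_image_similarity (hc : 0 < c) (θ : ℝ) :
    minStab (C.image (similarity b c α '' ·)) (similarity b c α q) (θ + α) = minStab C q θ := by
  have hstab (φ : ℝ) :=
    stab_image_of_injective (similarity_injective (b := b) α hc) C (image_ray_similarity α hc q φ)
  rw [minStab, minStab, add_right_comm, hstab, hstab]

lemma integral_minStab_image_similarity (hc : 0 < c) :
    ∫ θ in (0 : ℝ)..π, minStab (C.image (similarity b c α '' ·)) (similarity b c α q) θ =
      ∫ θ in (0 : ℝ)..π, minStab C q θ :=
  calc _ = ∫ θ in (0 : ℝ)..π, minStab C q (θ - α) := by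
        congr with θ
        rw [← minStab_image_similarity α C q hc (θ - α), sub_add_cancel]
    _ = ∫ θ in -α..-α + π, minStab C q θ := by
        rw [intervalIntegral.integral_comp_sub_right, zero_sub, sub_eq_neg_add]
    _ = _ := by simpa using (minStab_periodic C q).intervalIntegral_add_eq (-α) 0

end Similarity

theorem stmt5_general (b : Plane) (c : ℝ) (hc : 0 < c) (α : ℝ) (f : Plane → Plane)
    (hf : ∀ x, f x = b + c • rot α x)
    (C : Finset (Set Plane)) (q : Plane) :
    pointDepth (C.image fun A => f '' A) (f q) = pointDepth C q := by
  obtain rfl : f = similarity b c α := funext hf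
  rw [pointDepth_eq_integral_minStab, pointDepth_eq_integral_minStab,
    card_image_similarity α C hc, integral_minStab_image_similarity α C q hc]

theorem stmt5 (b : Plane) (c : ℝ) (hc : 0 < c) (α : ℝ) (f : Plane → Plane)
    (hf : ∀ x, f x = b + c • rot α x)
    (n : ℕ) (hn : 1 ≤ n) (C : Finset (Set Plane)) (hC : C.card = n) (q : Plane)
    (hint : IntervalIntegrable
      (fun θ : ℝ => (min (stab C q θ) (stab C q (θ + π)) : ℝ)) volume 0 π) :
    pointDepth (C.image fun A => f '' A) (f q) = pointDepth C q :=
  stmt5_general b c hc α f hf C q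
end
end

section
/- The supremum of point depth is achieved over the convex hull of the sample: let C be a nonempty finite family of n subsets of the plane (n ≥ 1) whose union ⋃C is nonempty, and assume for every q the function θ ↦ min(stab_C(q,θ), stab_C(q,θ+π)) is measurable. Then the supremum over all points q ∈ ℝ² of the depth D(q,C) equals the supremum of D(q,C) taken over points q in the closure of the convex hull of ⋃C. -/
open Real MeasureTheory
open scoped Classical

noncomputable section

lemma stab_eq_zero (C : Finset (Set Plane)) (q : Plane) (θ : ℝ)
    (f : Plane →L[ℝ] ℝ) (c : ℝ) (hfq : f q < c)
    (hfC : ∀ A ∈ C, ∀ p ∈ A, c < f p)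
    (hdir : f ((WithLp.equiv 2 (Fin 2 → ℝ)).symm ![Real.cos θ, Real.sin θ]) ≤ 0) :
    stab C q θ = 0 := by
  rw [stab, Finset.card_eq_zero, Finset.filter_eq_empty_iff]
  rintro A hA ⟨p, ⟨t, ht, rfl⟩, hpA⟩
  have h1 : c < f (q + t • (WithLp.equiv 2 (Fin 2 → ℝ)).symm ![Real.cos θ, Real.sin θ]) :=
    hfC A hA _ hpA
  have h2 : f (q + t • (WithLp.equiv 2 (Fin 2 → ℝ)).symm ![Real.cos θ, Real.sin θ])
      = f q + t * f ((WithLp.equiv 2 (Fin 2 → ℝ)).symm ![Real.cos θ, Real.sin θ]) := by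
    simp [map_add, _root_.map_smul, smul_eq_mul]
  nlinarith [mul_nonpos_of_nonneg_of_nonpos ht hdir]

lemma dir_add_pi (θ : ℝ) :
    ((WithLp.equiv 2 (Fin 2 → ℝ)).symm ![Real.cos (θ + π), Real.sin (θ + π)] : Plane)
      = -((WithLp.equiv 2 (Fin 2 → ℝ)).symm ![Real.cos θ, Real.sin θ]) := by
  have : ![Real.cos (θ + π), Real.sin (θ + π)] = -![Real.cos θ, Real.sin θ] := by
    funext i
    fin_cases i <;> simp [Real.cos_add_pi, Real.sin_add_pi]
  rw [this]
  rfl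

lemma depth_zero (C : Finset (Set Plane)) (q : Plane)
    (hq : q ∉ closure (convexHull ℝ (⋃ A ∈ C, A))) : pointDepth C q = 0 := by
  obtain ⟨f, c, hfq, hfK⟩ := geometric_hahn_banach_point_closed
    ((convex_convexHull ℝ _).closure) isClosed_closure hq
  have hfC : ∀ A ∈ C, ∀ p ∈ A, c < f p := by
    intro A hA p hp
    exact hfK p (subset_closure (subset_convexHull ℝ _ (Set.mem_biUnion hA hp)))
  have key : ∀ θ : ℝ, (min (stab C q θ) (stab C q (θ + π)) : ℝ) = 0 := by
    intro θ
    rcases le_total (f ((WithLp.equiv 2 (Fin 2 → ℝ)).symm ![Real.cos θ, Real.sin θ])) 0 with h | h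
    · rw [stab_eq_zero C q θ f c hfq hfC h]; simp
    · have h2 : f ((WithLp.equiv 2 (Fin 2 → ℝ)).symm ![Real.cos (θ+π), Real.sin (θ+π)]) ≤ 0 := by
        rw [dir_add_pi, map_neg]; linarith
      rw [stab_eq_zero C q (θ + π) f c hfq hfC h2]; simp
  rw [pointDepth, intervalIntegral.integral_congr (g := fun _ => (0:ℝ)) (fun x _ => key x)]
  simp

theorem stmt14 (n : ℕ) (hn : 1 ≤ n) (C : Finset (Set Plane)) (hC : C.card = n)
    (hne : (⋃ A ∈ C, A).Nonempty)
    (hmeas : ∀ q : Plane,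
      Measurable fun θ : ℝ => (min (stab C q θ) (stab C q (θ + π)) : ℝ)) :
    (⨆ q : Plane, pointDepth C q) =
      ⨆ q ∈ closure (convexHull ℝ (⋃ A ∈ C, A)), pointDepth C q := by
  refine iSup_congr fun q => ?_
  by_cases hq : q ∈ closure (convexHull ℝ (⋃ A ∈ C, A))
  · exact (ciSup_pos (f := fun _ : q ∈ closure (convexHull ℝ (⋃ A ∈ C, A)) => pointDepth C q) hq).symm
  · rw [depth_zero C q hq]
    haveI : IsEmpty (q ∈ closure (convexHull ℝ (⋃ A ∈ C, A))) := ⟨hq⟩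
    exact (Real.iSup_of_isEmpty _).symm
end
end
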